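/- Assume additionally that D is a differentiation basis (for f ∈ L¹, the averages f_{Q_{j,k(j,x)}} over the cube at level j containing x converge to f(x) for a.e. x). If |⟨f, ψ^λ_{j,k}⟩| ≤ C·μ(Q_{j,k})^{α+1/2} for all j,k,λ, then |f(x) − f(y)| ≤ (2C·B^α·√(B(B−1)) / (B^α − (B−1)^α)) · δ_D(x,y)^α for almost every pair x,y ∈ X. -/

import Mathlib

open MeasureTheory Set

/-- A dyadic family with inheritance coefficient `B` on a probability space `(X, μ)`:
nested finite partitions `cubes j` of `X` into measurable sets of positive measure,
`cubes 0 = {univ}`, each cube at level `j+1` strictly contained in a unique cube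
(its first ancestor) at level `j`, and `μ(ancestor) ≤ B · μ(child)`. -/
structure DyadicFamily {X : Type*} [MeasurableSpace X] (μ : MeasureTheory.Measure X)
    (B : ℝ) where
  cubes : ℕ → Set (Set X)
  finiteLevel : ∀ j, (cubes j).Finite
  meas : ∀ j, ∀ Q ∈ cubes j, MeasurableSet Q
  zeroth : cubes 0 = {Set.univ}
  cover : ∀ j, ⋃₀ cubes j = Set.univ
  pdisjoint : ∀ j, (cubes j).PairwiseDisjoint id
  posMeasure : ∀ j, ∀ Q ∈ cubes j, 0 < μ Q
  ancestor : ∀ j, ∀ Q ∈ cubes (j + 1), ∃! P, P ∈ cubes j ∧ Q ⊂ P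
  inherit : ∀ j, ∀ Q ∈ cubes (j + 1), ∀ P ∈ cubes j, Q ⊂ P →
    (μ P).toReal ≤ B * (μ Q).toReal
  prob : μ Set.univ = 1

namespace DyadicFamily

variable {X : Type*} [MeasurableSpace X] {μ : MeasureTheory.Measure X} {B : ℝ}

/-- Membership in the dyadic family: `Q` is a cube of some level. -/
def Mem (D : DyadicFamily μ B) (Q : Set X) : Prop := ∃ j, Q ∈ D.cubes j

/-- The offspring of a cube `Q` of level `j`: the cubes of level `j+1`
strictly contained in `Q` (equivalently, whose first ancestor is `Q`). -/
def offspring (D : DyadicFamily μ B) (j : ℕ) (Q : Set X) : Set (Set X) :=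
  {Q' ∈ D.cubes (j + 1) | Q' ⊂ Q}

/-- The pseudo-ultrametric `δ_D(x,y) = inf {μ(Q) : x, y ∈ Q ∈ D}`. -/
noncomputable def delta (D : DyadicFamily μ B) (x y : X) : ℝ :=
  sInf {r : ℝ | ∃ Q, D.Mem Q ∧ x ∈ Q ∧ y ∈ Q ∧ r = (μ Q).toReal}

/-- The distance between two dyadic cubes via the smallest common dyadic ancestor. -/
noncomputable def cubeDist (D : DyadicFamily μ B) (Q₁ Q₂ : Set X) : ℝ :=
  sInf {r : ℝ | ∃ P, D.Mem P ∧ Q₁ ∪ Q₂ ⊆ P ∧ r = (μ P).toReal}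

/-- Mean value of `f` over `Q`. -/
noncomputable def avg (μ : MeasureTheory.Measure X) (f : X → ℝ) (Q : Set X) : ℝ :=
  ((μ Q).toReal)⁻¹ * ∫ x in Q, f x ∂μ

/-- `f` belongs to `V_{j,Q}`: it vanishes outside `Q` and is constant on each
offspring cube of `Q`. -/
def MemV (D : DyadicFamily μ B) (j : ℕ) (Q : Set X) (f : X → ℝ) : Prop :=
  (∀ Q' ∈ D.offspring j Q, ∃ c : ℝ, ∀ x ∈ Q', f x = c) ∧ ∀ x ∉ Q, f x = 0

end DyadicFamily

/-!
Fix a cube `P` of level `j`. The function equal to `f_R - f_P` on each child `R` of `P` and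
vanishing off `P` lies in `V_{j,P}` and has mean zero, so it is a combination of the Haar
functions `ψ^λ_P`, and its coefficients are those of `f`. Being constant on a child `Q`,
Parseval gives `μ(Q) |f_Q - f_P|² ≤ ∑_λ |⟨f, ψ^λ_P⟩|² ≤ (B - 1) C² μ(P)^{2α+1}`; since
`μ(P) ≤ B μ(Q)` this is `|f_Q - f_P| ≤ C √(B(B-1)) μ(P)^α`. Each cube has at least two
children of measure `≥ μ(P)/B`, so along the cubes containing `x` the measures decrease by the
factor `(B-1)/B`, and the differences of averages are dominated by a geometric series of ratio
`((B-1)/B)^α`. At points where the averages converge this bounds `|f(x) - f_P|` for every cube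
`P ∋ x`; two such bounds for `x` and `y` and the infimum over common cubes give the estimate.
-/

open Filter Topology

section Orthonormal

variable {X : Type*} [MeasurableSpace X] {μ : Measure X} {n : ℕ} {ψ : ℕ → X → ℝ}

theorem integral_sum_mul_of_orthonormal
    (hint : ∀ k < n, ∀ l < n, Integrable (fun x => ψ k x * ψ l x) μ)
    (hortho : ∀ k < n, ∀ l < n, ∫ x, ψ k x * ψ l x ∂μ = if k = l then 1 else 0)
    (a : ℕ → ℝ) {l : ℕ} (hl : l < n) :
    ∫ x, (∑ k ∈ Finset.range n, a k * ψ k x) * ψ l x ∂μ = a l := by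
  simp_rw [Finset.sum_mul, mul_assoc]
  rw [integral_finsetSum _ fun k hk => (hint k (Finset.mem_range.1 hk) l hl).const_mul (a k)]
  simp_rw [integral_const_mul]
  rw [Finset.sum_congr rfl fun k hk => by rw [hortho k (Finset.mem_range.1 hk) l hl]]
  simp [hl]

theorem integral_sum_sq_of_orthonormal
    (hint : ∀ k < n, ∀ l < n, Integrable (fun x => ψ k x * ψ l x) μ)
    (hortho : ∀ k < n, ∀ l < n, ∫ x, ψ k x * ψ l x ∂μ = if k = l then 1 else 0)
    (a : ℕ → ℝ) :
    ∫ x, (∑ k ∈ Finset.range n, a k * ψ k x) ^ 2 ∂μ = ∑ k ∈ Finset.range n, a k ^ 2 := by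
  have hsq : ∀ x, (∑ k ∈ Finset.range n, a k * ψ k x) ^ 2
      = ∑ l ∈ Finset.range n, a l * ((∑ k ∈ Finset.range n, a k * ψ k x) * ψ l x) := by
    intro x
    rw [sq, Finset.mul_sum]
    exact Finset.sum_congr rfl fun l _ => by ring
  have hint' : ∀ l < n, Integrable (fun x => (∑ k ∈ Finset.range n, a k * ψ k x) * ψ l x) μ := by
    intro l hl
    simp_rw [Finset.sum_mul, mul_assoc]
    exact integrable_finsetSum _ fun k hk =>
      (hint k (Finset.mem_range.1 hk) l hl).const_mul (a k)
  simp_rw [hsq]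
  rw [integral_finsetSum _ fun l hl => (hint' l (Finset.mem_range.1 hl)).const_mul (a l)]
  refine Finset.sum_congr rfl fun l hl => ?_
  rw [integral_const_mul, integral_sum_mul_of_orthonormal hint hortho a (Finset.mem_range.1 hl),
    sq]

end Orthonormal

theorem le_mul_rpow_csInf {S : Set ℝ} {a K α : ℝ} (hS : S.Nonempty) (hS' : BddBelow S)
    (hα : 0 ≤ α) (h : ∀ s ∈ S, a ≤ K * s ^ α) : a ≤ K * sInf S ^ α := by
  obtain ⟨u, -, hu, huS⟩ := exists_seq_tendsto_sInf hS hS'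
  exact ge_of_tendsto'
    (((Real.continuousAt_rpow_const _ α (Or.inr hα)).tendsto.comp hu).const_mul K)
    fun i => h _ (huS i)

theorem abs_sub_le_of_tendsto_of_rpow_geometric {a m : ℕ → ℝ} {L r K α : ℝ} (hα : 0 < α)
    (hr₀ : 0 ≤ r) (hr₁ : r < 1) (hK : 0 ≤ K) (hm₀ : ∀ i, 0 ≤ m i)
    (hm : ∀ i, m (i + 1) ≤ r * m i) (ha : ∀ i, |a (i + 1) - a i| ≤ K * m i ^ α)
    (hL : Tendsto a atTop (𝓝 L)) : |a 0 - L| ≤ K * m 0 ^ α / (1 - r ^ α) := by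
  have hdecay : ∀ i, m i ^ α ≤ m 0 ^ α * (r ^ α) ^ i := by
    intro i
    induction i with
    | zero => simp
    | succ i ih =>
      calc m (i + 1) ^ α ≤ (r * m i) ^ α := Real.rpow_le_rpow (hm₀ _) (hm i) hα.le
        _ = r ^ α * m i ^ α := Real.mul_rpow hr₀ (hm₀ i)
        _ ≤ r ^ α * (m 0 ^ α * (r ^ α) ^ i) := by gcongr
        _ = m 0 ^ α * (r ^ α) ^ (i + 1) := by ring
  rw [← Real.dist_eq]
  refine dist_le_of_le_geometric_of_tendsto₀ (r ^ α) (K * m 0 ^ α)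
    (Real.rpow_lt_one hr₀ hr₁ hα) (fun i => ?_) hL
  rw [Real.dist_eq, abs_sub_comm, mul_assoc]
  exact (ha i).trans (mul_le_mul_of_nonneg_left (hdecay i) hK)

namespace DyadicFamily

variable {X : Type*} [MeasurableSpace X] {μ : Measure X} {B : ℝ}

theorem isProbabilityMeasure (D : DyadicFamily μ B) : IsProbabilityMeasure μ := ⟨D.prob⟩

variable (D : DyadicFamily μ B) {j : ℕ} {P Q R : Set X} {x : X}

theorem measureReal_pos (hQ : Q ∈ D.cubes j) : 0 < μ.real Q :=
  haveI := D.isProbabilityMeasure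
  ENNReal.toReal_pos (D.posMeasure j Q hQ).ne' (measure_ne_top μ Q)

theorem eq_of_mem_of_mem (hP : P ∈ D.cubes j) (hQ : Q ∈ D.cubes j) (hxP : x ∈ P)
    (hxQ : x ∈ Q) : P = Q :=
  by_contra fun hne => Set.disjoint_left.1 (D.pdisjoint j hP hQ hne) hxP hxQ

theorem exists_mem_cubes (j : ℕ) (x : X) : ∃ Q ∈ D.cubes j, x ∈ Q :=
  sUnion_eq_univ_iff.1 (D.cover j) x

/-- `Q_{j,k(j,x)}` in the paper. -/
noncomputable def cubeAt (j : ℕ) (x : X) : Set X := (D.exists_mem_cubes j x).choose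

theorem cubeAt_mem_cubes (j : ℕ) (x : X) : D.cubeAt j x ∈ D.cubes j :=
  (D.exists_mem_cubes j x).choose_spec.1

theorem mem_cubeAt (j : ℕ) (x : X) : x ∈ D.cubeAt j x :=
  (D.exists_mem_cubes j x).choose_spec.2

theorem eq_cubeAt (hQ : Q ∈ D.cubes j) (hx : x ∈ Q) : Q = D.cubeAt j x :=
  D.eq_of_mem_of_mem hQ (D.cubeAt_mem_cubes j x) hx (D.mem_cubeAt j x)

theorem cubeAt_succ_mem_offspring (hP : P ∈ D.cubes j) (hx : x ∈ P) :
    D.cubeAt (j + 1) x ∈ D.offspring j P := by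
  obtain ⟨P', ⟨hP', hsub⟩, -⟩ := D.ancestor j _ (D.cubeAt_mem_cubes (j + 1) x)
  obtain rfl : P' = P := D.eq_of_mem_of_mem hP' hP (hsub.subset (D.mem_cubeAt _ x)) hx
  exact ⟨D.cubeAt_mem_cubes _ x, hsub⟩

theorem measureReal_offspring_le (hP : P ∈ D.cubes j) (hQ : Q ∈ D.offspring j P) :
    μ.real Q ≤ (B - 1) / B * μ.real P := by
  have := D.isProbabilityMeasure
  obtain ⟨z, hzP, hzQ⟩ := exists_of_ssubset hQ.2
  set R := D.cubeAt (j + 1) z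
  have hR : R ∈ D.offspring j P := D.cubeAt_succ_mem_offspring hP hzP
  have hQR : Disjoint Q R := D.pdisjoint (j + 1) hQ.1 hR.1 fun h => hzQ (h ▸ D.mem_cubeAt _ z)
  have hsum : μ.real Q + μ.real R ≤ μ.real P := by
    rw [← measureReal_union hQR (D.meas _ R hR.1)]
    exact measureReal_mono (union_subset hQ.2.subset hR.2.subset)
  have hinh : μ.real P ≤ B * μ.real R := D.inherit j R hR.1 P hP hR.2
  have hB : 0 < B := pos_of_mul_pos_left ((D.measureReal_pos hP).trans_le hinh)
    measureReal_nonneg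
  rw [div_mul_eq_mul_div, le_div_iff₀ hB]
  nlinarith

noncomputable def children (j : ℕ) (P : Set X) : Finset (Set X) :=
  ((D.finiteLevel (j + 1)).subset fun _ h => h.1 : (D.offspring j P).Finite).toFinset

@[simp]
theorem mem_children : R ∈ D.children j P ↔ R ∈ D.offspring j P := Finite.mem_toFinset _

theorem card_children (j : ℕ) (P : Set X) : (D.children j P).card = (D.offspring j P).ncard :=
  (ncard_eq_toFinset_card _ _).symm

theorem children_pairwiseDisjoint (j : ℕ) (P : Set X) :
    (D.children j P : Set (Set X)).PairwiseDisjoint id :=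
  (D.pdisjoint (j + 1)).subset fun _ h => (D.mem_children.1 h).1

theorem measurableSet_of_mem_children (hR : R ∈ D.children j P) : MeasurableSet R :=
  D.meas _ R (D.mem_children.1 hR).1

theorem biUnion_children (hP : P ∈ D.cubes j) : ⋃ R ∈ D.children j P, R = P := by
  refine subset_antisymm (iUnion₂_subset fun R hR => (D.mem_children.1 hR).2.subset)
    fun x hx => mem_biUnion (D.mem_children.2 (D.cubeAt_succ_mem_offspring hP hx))
      (D.mem_cubeAt _ x)

theorem sum_measureReal_children (hP : P ∈ D.cubes j) :
    ∑ R ∈ D.children j P, μ.real R = μ.real P := by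
  have := D.isProbabilityMeasure
  conv_rhs => rw [← D.biUnion_children hP]
  exact (measureReal_biUnion_finset (D.children_pairwiseDisjoint j P)
    fun _ => D.measurableSet_of_mem_children).symm

theorem sum_setIntegral_children (hP : P ∈ D.cubes j) {F : X → ℝ} (hF : Integrable F μ) :
    ∑ R ∈ D.children j P, ∫ x in R, F x ∂μ = ∫ x in P, F x ∂μ := by
  rw [← integral_biUnion_finset _ (fun _ => D.measurableSet_of_mem_children)
    (D.children_pairwiseDisjoint j P) fun _ _ => hF.integrableOn, D.biUnion_children hP]

theorem ncard_offspring_le (hP : P ∈ D.cubes j) : ((D.offspring j P).ncard : ℝ) ≤ B := by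
  have hcard : ((D.offspring j P).ncard : ℝ) * μ.real P ≤ B * μ.real P :=
    calc ((D.offspring j P).ncard : ℝ) * μ.real P = ∑ R ∈ D.children j P, μ.real P := by
          rw [Finset.sum_const, nsmul_eq_mul, D.card_children]
      _ ≤ ∑ R ∈ D.children j P, B * μ.real R := Finset.sum_le_sum fun R hR =>
          D.inherit j R (D.mem_children.1 hR).1 P hP (D.mem_children.1 hR).2
      _ = B * μ.real P := by rw [← Finset.mul_sum, D.sum_measureReal_children hP]
  exact le_of_mul_le_mul_right hcard (D.measureReal_pos hP)

section StepFunctions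

variable {g : X → ℝ} {w : Set X → ℝ}

theorem mul_eq_sum_indicator (hP : P ∈ D.cubes j) (hg₀ : ∀ x ∉ P, g x = 0)
    (hw : ∀ R ∈ D.offspring j P, ∀ x ∈ R, g x = w R) (F : X → ℝ) (x : X) :
    F x * g x = ∑ R ∈ D.children j P, R.indicator (fun z => w R * F z) x := by
  by_cases hx : x ∈ P
  · have hR₀ := D.cubeAt_succ_mem_offspring hP hx
    rw [Finset.sum_eq_single_of_mem _ (D.mem_children.2 hR₀) fun R hR hne => ?_,
      indicator_of_mem (D.mem_cubeAt _ x), hw _ hR₀ x (D.mem_cubeAt _ x), mul_comm]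
    exact indicator_of_notMem (fun hxR => hne (D.eq_cubeAt (D.mem_children.1 hR).1 hxR)) _
  · rw [hg₀ x hx, mul_zero]
    exact (Finset.sum_eq_zero fun R hR =>
      indicator_of_notMem (fun hxR => hx ((D.mem_children.1 hR).2.subset hxR)) _).symm

theorem integrable_mul_of_memV {F : X → ℝ} (hP : P ∈ D.cubes j) (hg : D.MemV j P g)
    (hF : Integrable F μ) : Integrable (fun x => F x * g x) μ := by
  choose! w hw using hg.1
  simp_rw [D.mul_eq_sum_indicator hP hg.2 hw]
  exact integrable_finsetSum _ fun R hR =>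
    (hF.const_mul (w R)).indicator (D.measurableSet_of_mem_children hR)

theorem integrable_of_memV (hP : P ∈ D.cubes j) (hg : D.MemV j P g) : Integrable g μ := by
  have := D.isProbabilityMeasure
  simpa using D.integrable_mul_of_memV hP hg (integrable_const 1)

theorem integral_mul_eq_sum {F : X → ℝ} (hP : P ∈ D.cubes j) (hg₀ : ∀ x ∉ P, g x = 0)
    (hw : ∀ R ∈ D.offspring j P, ∀ x ∈ R, g x = w R) (hF : Integrable F μ) :
    ∫ x, F x * g x ∂μ = ∑ R ∈ D.children j P, w R * ∫ x in R, F x ∂μ := by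
  simp_rw [D.mul_eq_sum_indicator hP hg₀ hw]
  rw [integral_finsetSum _ fun R hR =>
    (hF.const_mul (w R)).indicator (D.measurableSet_of_mem_children hR)]
  refine Finset.sum_congr rfl fun R hR => ?_
  rw [integral_indicator (D.measurableSet_of_mem_children hR), integral_const_mul]

end StepFunctions

theorem setIntegral_eq_measureReal_mul_avg (hQ : Q ∈ D.cubes j) (f : X → ℝ) :
    ∫ x in Q, f x ∂μ = μ.real Q * avg μ f Q := by
  rw [avg, ← measureReal_def, mul_inv_cancel_left₀ (D.measureReal_pos hQ).ne']

noncomputable def avgIncrement (j : ℕ) (f : X → ℝ) (P : Set X) : X → ℝ :=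
  P.indicator fun x => avg μ f (D.cubeAt (j + 1) x) - avg μ f P

variable {f : X → ℝ}

theorem avgIncrement_eq (hR : R ∈ D.offspring j P) (hx : x ∈ R) :
    D.avgIncrement j f P x = avg μ f R - avg μ f P := by
  rw [avgIncrement, indicator_of_mem (hR.2.subset hx), ← D.eq_cubeAt hR.1 hx]

theorem memV_avgIncrement : D.MemV j P (D.avgIncrement j f P) :=
  ⟨fun _ hR => ⟨_, fun _ hx => D.avgIncrement_eq hR hx⟩, fun _ hx => indicator_of_notMem hx _⟩

theorem setIntegral_avgIncrement (hR : R ∈ D.offspring j P) :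
    ∫ x in R, D.avgIncrement j f P x ∂μ = ∫ x in R, f x ∂μ - μ.real R * avg μ f P := by
  rw [setIntegral_congr_fun (D.meas _ R hR.1) fun x hx => D.avgIncrement_eq hR hx,
    setIntegral_const, smul_eq_mul, D.setIntegral_eq_measureReal_mul_avg hR.1]
  ring

theorem integral_avgIncrement (hP : P ∈ D.cubes j) (hf : Integrable f μ) :
    ∫ x, D.avgIncrement j f P x ∂μ = 0 := by
  rw [← setIntegral_eq_integral_of_forall_compl_eq_zero D.memV_avgIncrement.2,
    ← D.sum_setIntegral_children hP (D.integrable_of_memV hP D.memV_avgIncrement),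
    Finset.sum_congr rfl fun R hR => D.setIntegral_avgIncrement (D.mem_children.1 hR),
    Finset.sum_sub_distrib, ← Finset.sum_mul, D.sum_setIntegral_children hP hf,
    D.sum_measureReal_children hP, D.setIntegral_eq_measureReal_mul_avg hP, sub_self]

theorem integral_avgIncrement_mul (hP : P ∈ D.cubes j) (hf : Integrable f μ) {g : X → ℝ}
    (hg : D.MemV j P g) (hg_zero : ∫ x, g x ∂μ = 0) :
    ∫ x, D.avgIncrement j f P x * g x ∂μ = ∫ x, f x * g x ∂μ := by
  have := D.isProbabilityMeasure
  choose! v hv using hg.1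
  have hv_sum : ∑ R ∈ D.children j P, v R * μ.real R = 0 := by
    simpa [hg_zero] using (D.integral_mul_eq_sum hP hg.2 hv (integrable_const (1 : ℝ))).symm
  rw [D.integral_mul_eq_sum hP hg.2 hv (D.integrable_of_memV hP D.memV_avgIncrement),
    D.integral_mul_eq_sum hP hg.2 hv hf,
    Finset.sum_congr rfl fun R hR => by rw [D.setIntegral_avgIncrement (D.mem_children.1 hR)]]
  simp_rw [mul_sub, Finset.sum_sub_distrib, sub_eq_self, ← mul_assoc, ← Finset.sum_mul, hv_sum,
    zero_mul]

section HaarCoefficients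

variable {n : ℕ} {ψ : ℕ → X → ℝ}

theorem measureReal_mul_sq_avg_sub_avg_le (hP : P ∈ D.cubes j) (hQ : Q ∈ D.offspring j P)
    (hf : Integrable f μ) (hV : ∀ k < n, D.MemV j P (ψ k))
    (hzero : ∀ k < n, ∫ x, ψ k x ∂μ = 0)
    (hortho : ∀ k < n, ∀ l < n, ∫ x, ψ k x * ψ l x ∂μ = if k = l then 1 else 0)
    (hspan : ∀ g : X → ℝ, D.MemV j P g → ∫ x, g x ∂μ = 0 →
      ∃ a : ℕ → ℝ, ∀ x, g x = ∑ k ∈ Finset.range n, a k * ψ k x) :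
    μ.real Q * (avg μ f Q - avg μ f P) ^ 2 ≤
      ∑ k ∈ Finset.range n, (∫ x, f x * ψ k x ∂μ) ^ 2 := by
  have hmem : D.MemV j P (D.avgIncrement j f P) := D.memV_avgIncrement
  have hint : ∀ k < n, ∀ l < n, Integrable (fun x => ψ k x * ψ l x) μ := fun k hk l hl =>
    D.integrable_mul_of_memV hP (hV l hl) (D.integrable_of_memV hP (hV k hk))
  obtain ⟨a, ha⟩ := hspan _ hmem (D.integral_avgIncrement hP hf)
  have ha_eq : ∀ k < n, a k = ∫ x, f x * ψ k x ∂μ := fun k hk => by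
    rw [← D.integral_avgIncrement_mul hP hf (hV k hk) (hzero k hk)]
    simp_rw [ha]
    exact (integral_sum_mul_of_orthonormal hint hortho a hk).symm
  have hsq_int : Integrable (fun x => D.avgIncrement j f P x ^ 2) μ := by
    simpa [sq] using D.integrable_mul_of_memV hP hmem (D.integrable_of_memV hP hmem)
  have hconst_on_Q : ∫ x in Q, D.avgIncrement j f P x ^ 2 ∂μ =
      ∫ _ in Q, (avg μ f Q - avg μ f P) ^ 2 ∂μ :=
    setIntegral_congr_fun (D.meas _ Q hQ.1) fun x hx => by
      simp only [D.avgIncrement_eq hQ hx]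
  calc μ.real Q * (avg μ f Q - avg μ f P) ^ 2
      = ∫ x in Q, D.avgIncrement j f P x ^ 2 ∂μ := by
        rw [hconst_on_Q, setIntegral_const, smul_eq_mul]
    _ ≤ ∫ x, D.avgIncrement j f P x ^ 2 ∂μ :=
        setIntegral_le_integral hsq_int (ae_of_all _ fun x => sq_nonneg _)
    _ = ∑ k ∈ Finset.range n, a k ^ 2 := by
        simp_rw [ha]
        exact integral_sum_sq_of_orthonormal hint hortho a
    _ = ∑ k ∈ Finset.range n, (∫ x, f x * ψ k x ∂μ) ^ 2 :=
        Finset.sum_congr rfl fun k hk => by rw [ha_eq k (Finset.mem_range.1 hk)]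

theorem abs_avg_sub_avg_le {C α : ℝ} (hC : 0 ≤ C) (hP : P ∈ D.cubes j)
    (hQ : Q ∈ D.offspring j P) (hf : Integrable f μ)
    (hdim : n + 1 = (D.offspring j P).ncard) (hV : ∀ k < n, D.MemV j P (ψ k))
    (hzero : ∀ k < n, ∫ x, ψ k x ∂μ = 0)
    (hortho : ∀ k < n, ∀ l < n, ∫ x, ψ k x * ψ l x ∂μ = if k = l then 1 else 0)
    (hspan : ∀ g : X → ℝ, D.MemV j P g → ∫ x, g x ∂μ = 0 →
      ∃ a : ℕ → ℝ, ∀ x, g x = ∑ k ∈ Finset.range n, a k * ψ k x)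
    (hcoeff : ∀ k < n, |∫ x, f x * ψ k x ∂μ| ≤ C * μ.real P ^ (α + 1 / 2)) :
    |avg μ f Q - avg μ f P| ≤ C * √(B * (B - 1)) * μ.real P ^ α := by
  set M := μ.real P
  have hM : 0 < M := D.measureReal_pos hP
  have hn : (n : ℝ) ≤ B - 1 := by
    have := D.ncard_offspring_le hP
    rw [← hdim] at this
    push_cast at this
    linarith
  have hB : 0 ≤ B - 1 := (Nat.cast_nonneg n).trans hn
  have hsum : ∑ k ∈ Finset.range n, (∫ x, f x * ψ k x ∂μ) ^ 2 ≤
      (B - 1) * (C ^ 2 * ((M ^ α) ^ 2 * M)) :=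
    calc ∑ k ∈ Finset.range n, (∫ x, f x * ψ k x ∂μ) ^ 2
        ≤ ∑ k ∈ Finset.range n, (C * M ^ (α + 1 / 2)) ^ 2 := Finset.sum_le_sum fun k hk => by
          rw [← sq_abs]
          exact pow_le_pow_left₀ (abs_nonneg _) (hcoeff k (Finset.mem_range.1 hk)) 2
      _ = n * (C ^ 2 * ((M ^ α) ^ 2 * M)) := by
          rw [Finset.sum_const, Finset.card_range, nsmul_eq_mul, Real.rpow_add hM,
            ← Real.sqrt_eq_rpow, mul_pow, mul_pow, Real.sq_sqrt hM.le]
      _ ≤ (B - 1) * (C ^ 2 * ((M ^ α) ^ 2 * M)) := by gcongr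
  have hQP : M ≤ B * μ.real Q := D.inherit j Q hQ.1 P hP hQ.2
  have hsq : M * (avg μ f Q - avg μ f P) ^ 2 ≤ M * (C * √(B * (B - 1)) * M ^ α) ^ 2 :=
    calc M * (avg μ f Q - avg μ f P) ^ 2 ≤ B * (μ.real Q * (avg μ f Q - avg μ f P) ^ 2) := by
          rw [← mul_assoc]; gcongr
      _ ≤ B * ((B - 1) * (C ^ 2 * ((M ^ α) ^ 2 * M))) := by
          refine mul_le_mul_of_nonneg_left ?_ (by linarith)
          exact (D.measureReal_mul_sq_avg_sub_avg_le hP hQ hf hV hzero hortho hspan).trans hsum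
      _ = M * (C * √(B * (B - 1)) * M ^ α) ^ 2 := by
          rw [mul_pow, mul_pow, Real.sq_sqrt (by nlinarith)]
          ring
  exact abs_le_of_sq_le_sq (le_of_mul_le_mul_left hsq hM) (by positivity)

end HaarCoefficients

theorem abs_avg_sub_le_of_tendsto (hB : 1 ≤ B) {K α : ℝ} (hα : 0 < α) (hK : 0 ≤ K)
    (hstep : ∀ j, ∀ P ∈ D.cubes j, ∀ Q ∈ D.offspring j P,
      |avg μ f Q - avg μ f P| ≤ K * μ.real P ^ α)
    (hx : Tendsto (fun i => avg μ f (D.cubeAt i x)) atTop (𝓝 (f x)))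
    (hP : P ∈ D.cubes j) (hxP : x ∈ P) :
    |avg μ f P - f x| ≤ K * μ.real P ^ α / (1 - ((B - 1) / B) ^ α) := by
  obtain rfl := D.eq_cubeAt hP hxP
  have hsucc : ∀ i, D.cubeAt (i + 1 + j) x ∈ D.offspring (i + j) (D.cubeAt (i + j) x) :=
    fun i => by
      rw [Nat.add_right_comm]
      exact D.cubeAt_succ_mem_offspring (D.cubeAt_mem_cubes _ x) (D.mem_cubeAt _ x)
  have hB₀ : 0 < B := by linarith
  simpa only [zero_add] using abs_sub_le_of_tendsto_of_rpow_geometric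
    (a := fun i => avg μ f (D.cubeAt (i + j) x)) (m := fun i => μ.real (D.cubeAt (i + j) x))
    hα (div_nonneg (by linarith) hB₀.le) ((div_lt_one hB₀).2 (by linarith)) hK
    (fun _ => measureReal_nonneg)
    (fun i => D.measureReal_offspring_le (D.cubeAt_mem_cubes _ x) (hsucc i))
    (fun i => hstep _ _ (D.cubeAt_mem_cubes _ x) _ (hsucc i))
    (hx.comp (tendsto_add_atTop_nat j))

theorem abs_sub_le_mul_delta_rpow (hB : 1 ≤ B) {K α : ℝ} (hα : 0 < α) (hK : 0 ≤ K)
    (hstep : ∀ j, ∀ P ∈ D.cubes j, ∀ Q ∈ D.offspring j P,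
      |avg μ f Q - avg μ f P| ≤ K * μ.real P ^ α) {y : X}
    (hx : Tendsto (fun i => avg μ f (D.cubeAt i x)) atTop (𝓝 (f x)))
    (hy : Tendsto (fun i => avg μ f (D.cubeAt i y)) atTop (𝓝 (f y))) :
    |f x - f y| ≤ 2 * K / (1 - ((B - 1) / B) ^ α) * D.delta x y ^ α := by
  refine le_mul_rpow_csInf ⟨_, univ, ⟨0, D.zeroth ▸ rfl⟩, mem_univ x, mem_univ y, rfl⟩
    ⟨0, ?_⟩ hα.le ?_
  · rintro _ ⟨Q, -, -, -, rfl⟩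
    exact ENNReal.toReal_nonneg
  · rintro _ ⟨Q, ⟨j, hQ⟩, hxQ, hyQ, rfl⟩
    have hxQ' := D.abs_avg_sub_le_of_tendsto hB hα hK hstep hx hQ hxQ
    have hyQ' := D.abs_avg_sub_le_of_tendsto hB hα hK hstep hy hQ hyQ
    calc |f x - f y| ≤ |avg μ f Q - f x| + |avg μ f Q - f y| := by
          simpa only [abs_sub_comm (f x)] using abs_sub_le (f x) (avg μ f Q) (f y)
      _ ≤ 2 * K / (1 - ((B - 1) / B) ^ α) * μ.real Q ^ α := by
          have : 2 * K / (1 - ((B - 1) / B) ^ α) * μ.real Q ^ α =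
              2 * (K * μ.real Q ^ α / (1 - ((B - 1) / B) ^ α)) := by ring
          linarith

end DyadicFamily

/-- Assume in addition that `D` is a differentiation basis: for
`f ∈ L¹`, the averages over the cube of level `j` containing `x` converge to `f(x)` for
a.e. `x`. If the Haar coefficients satisfy `|⟨f, ψ^λ_{j,k}⟩| ≤ C μ(Q_{j,k})^{α+1/2}`,
then `|f(x) − f(y)| ≤ (2C B^α √(B(B−1)) / (B^α − (B−1)^α)) δ_D(x,y)^α` for almost every
pair `(x,y)`. -/
theorem lipschitz_of_haar_coeff_of_diff_basis {X : Type*} [MeasurableSpace X]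
    {μ : MeasureTheory.Measure X} {B : ℝ} (hB : 2 ≤ B) (D : DyadicFamily μ B)
    (α : ℝ) (hα : 0 < α) (C : ℝ) (hC : 0 < C)
    (f : X → ℝ) (hf : MeasureTheory.Integrable f μ)
    -- `c j x` is the unique cube of level `j` containing `x`
    (c : ℕ → X → Set X) (hc : ∀ j x, c j x ∈ D.cubes j ∧ x ∈ c j x)
    -- differentiation basis hypothesis
    (hdiff : ∀ᵐ x ∂μ, Filter.Tendsto (fun j => DyadicFamily.avg μ f (c j x))
      Filter.atTop (nhds (f x)))
    -- the generalized Haar system of `D` and the coefficient power law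
    (dimm : ℕ → Set X → ℕ) (ψ : ℕ → Set X → ℕ → X → ℝ)
    (hdim : ∀ j, ∀ Q ∈ D.cubes j, dimm j Q + 1 = (D.offspring j Q).ncard)
    (hV : ∀ j, ∀ Q ∈ D.cubes j, ∀ lam < dimm j Q, D.MemV j Q (ψ j Q lam))
    (hzero : ∀ j, ∀ Q ∈ D.cubes j, ∀ lam < dimm j Q, ∫ x, ψ j Q lam x ∂μ = 0)
    (hortho : ∀ j, ∀ Q ∈ D.cubes j, ∀ lam < dimm j Q, ∀ lam' < dimm j Q,
      ∫ x, ψ j Q lam x * ψ j Q lam' x ∂μ = if lam = lam' then 1 else 0)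
    (hspan : ∀ j, ∀ Q ∈ D.cubes j, ∀ g : X → ℝ, D.MemV j Q g → (∫ x, g x ∂μ) = 0 →
      ∃ cc : ℕ → ℝ, ∀ x, g x = ∑ lam ∈ Finset.range (dimm j Q), cc lam * ψ j Q lam x)
    (hcoeff : ∀ j, ∀ Q ∈ D.cubes j, ∀ lam < dimm j Q,
      |∫ x, f x * ψ j Q lam x ∂μ| ≤ C * (μ Q).toReal ^ (α + 1/2)) :
    ∀ᵐ p ∂(μ.prod μ),
      |f p.1 - f p.2| ≤
        (2 * C * B ^ α * Real.sqrt (B * (B - 1)) / (B ^ α - (B - 1) ^ α)) *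
          D.delta p.1 p.2 ^ α := by
  obtain rfl : c = D.cubeAt := funext₂ fun j x => D.eq_cubeAt (hc j x).1 (hc j x).2
  have hstep : ∀ j, ∀ P ∈ D.cubes j, ∀ Q ∈ D.offspring j P,
      |DyadicFamily.avg μ f Q - DyadicFamily.avg μ f P| ≤
        C * √(B * (B - 1)) * μ.real P ^ α := fun j P hP Q hQ =>
    D.abs_avg_sub_avg_le hC.le hP hQ hf (hdim j P hP) (hV j P hP) (hzero j P hP)
      (hortho j P hP) (hspan j P hP) (hcoeff j P hP)
  have hconst : 2 * C * B ^ α * √(B * (B - 1)) / (B ^ α - (B - 1) ^ α) =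
      2 * (C * √(B * (B - 1))) / (1 - ((B - 1) / B) ^ α) := by
    have hBα : 0 < B ^ α := Real.rpow_pos_of_pos (by linarith) α
    have hgap : (B - 1) ^ α < B ^ α := Real.rpow_lt_rpow (by linarith) (by linarith) hα
    rw [Real.div_rpow (by linarith) (by linarith), one_sub_div hBα.ne']
    field_simp
  rw [hconst]
  filter_upwards [Measure.quasiMeasurePreserving_fst.ae hdiff,
    Measure.quasiMeasurePreserving_snd.ae hdiff] with p hx hy
  exact D.abs_sub_le_mul_delta_rpow (by linarith) hα (by positivity) hstep hx hy
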